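/- Fix M > 0, an initial condition (x^0,v^0) ∈ (ℝ^d)^N × (ℝ^d)^N with V_0 = B(v^0,v^0) > 0, and 0 < α ≤ M/(N √V_0). Consider the controlled Cucker-Smale system ẋ_i = v_i, v̇_i = (1/N) Σ_{j=1}^N a(‖x_i − x_j‖)(v_j − v_i) + u_i(t) with feedback control u(t) = −α v^⊥(t), i.e. u_i(t) = −α (v_i(t) − v̄(t)). Then: (1) the control is admissible, i.e. Σ_{i=1}^N ‖u_i(t)‖ ≤ M for every t ≥ 0; (2) V(t) ≤ e^{−2αt} V(0) for all t ≥ 0, so the associated solution tends to consensus and reaches the consensus region in finite time. -/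

import Mathlib

open scoped BigOperators InnerProductSpace
open MeasureTheory Filter

/-- The symmetric bilinear form `B(v,w) = (1/(2N²)) ∑ᵢ∑ⱼ (vᵢ-vⱼ)·(wᵢ-wⱼ)`. -/
noncomputable def bform {d N : ℕ} (v w : Fin N → EuclideanSpace ℝ (Fin d)) : ℝ :=
  (2 * (N : ℝ) ^ 2)⁻¹ * ∑ i, ∑ j, ⟪v i - v j, w i - w j⟫_ℝ

/-- The mean of `N` vectors. -/
noncomputable def meanVec {d N : ℕ} (v : Fin N → EuclideanSpace ℝ (Fin d)) :
    EuclideanSpace ℝ (Fin d) :=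
  (N : ℝ)⁻¹ • ∑ i, v i

/-!
Because `B` only sees differences `v_i - v_j`, the feedback `-α v^⊥` contributes exactly
`-2αV` to `dV/dt`, while the alignment term contributes `2 B(v, F) ≤ 0`: with `F` built from
the symmetric kernel `a(‖x_i - x_j‖)`, `∑ F_i = 0` and `B(v, F)` reduces to
`-(1/2N²) ∑ a(‖x_i - x_j‖) ‖v_i - v_j‖²`. Grönwall gives `V(t) ≤ e^{-2αt} V(0)`.
Admissibility is Cauchy–Schwarz, `∑ ‖v_i^⊥‖ ≤ N √V ≤ N √V(0)`, combined with the bound on `α`.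
Velocity differences decay like `e^{-αt}`, so position differences, hence `√X`, stay bounded by
some `R`; on `(√X, √X + 1]` the integrand is at least `a(√(2N)(R + 1)) > 0`, which `√V`
eventually undercuts.
-/

open Finset

section InnerSums
variable {ι E : Type*} [Fintype ι] [NormedAddCommGroup E] [InnerProductSpace ℝ E]

theorem sum_sum_inner_sub_sub (w z : ι → E) :
    ∑ i, ∑ j, ⟪w i - w j, z i - z j⟫_ℝ
      = 2 * Fintype.card ι * ∑ i, ⟪w i, z i⟫_ℝ - 2 * ⟪∑ i, w i, ∑ i, z i⟫_ℝ := by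
  simp only [inner_sub_left, inner_sub_right, sum_sub_distrib, sum_const, card_univ,
    nsmul_eq_mul, ← sum_inner, ← inner_sum, ← mul_sum]
  ring

theorem sum_sum_smul_sub_eq_zero {A : ι → ι → ℝ} (hA : ∀ i j, A i j = A j i) (w : ι → E) :
    ∑ i, ∑ j, A i j • (w j - w i) = 0 := by
  have hS : ∑ i, ∑ j, A i j • (w j - w i) = -∑ i, ∑ j, A i j • (w j - w i) := by
    conv_lhs => rw [sum_comm]
    rw [← sum_neg_distrib]
    refine sum_congr rfl fun i _ => ?_
    rw [← sum_neg_distrib]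
    refine sum_congr rfl fun j _ => ?_
    rw [hA, ← smul_neg, neg_sub]
  calc ∑ i, ∑ j, A i j • (w j - w i)
        = (2 : ℝ)⁻¹ • (∑ i, ∑ j, A i j • (w j - w i) + ∑ i, ∑ j, A i j • (w j - w i)) := by
          module
    _ = 0 := by nth_rewrite 2 [hS]; rw [add_neg_cancel, smul_zero]

theorem sum_sum_mul_inner_sub_nonpos {A : ι → ι → ℝ} (hA : ∀ i j, A i j = A j i)
    (hA₀ : ∀ i j, 0 ≤ A i j) (w : ι → E) :
    ∑ i, ∑ j, A i j * ⟪w i, w j - w i⟫_ℝ ≤ 0 := by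
  have hswap : ∑ i, ∑ j, A i j * ⟪w i, w j - w i⟫_ℝ
      = ∑ i, ∑ j, A i j * ⟪w j, w i - w j⟫_ℝ := by
    rw [sum_comm]
    exact sum_congr rfl fun i _ => sum_congr rfl fun j _ => by rw [hA]
  have hsq : ∑ i, ∑ j, A i j * ⟪w i, w j - w i⟫_ℝ + ∑ i, ∑ j, A i j * ⟪w j, w i - w j⟫_ℝ
      = -∑ i, ∑ j, A i j * ‖w j - w i‖ ^ 2 := by
    simp only [← sum_add_distrib, ← sum_neg_distrib, ← real_inner_self_eq_norm_sq,
      inner_sub_left, inner_sub_right]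
    refine sum_congr rfl fun i _ => sum_congr rfl fun j _ => ?_
    rw [real_inner_comm (w i) (w j)]
    ring
  have : 0 ≤ ∑ i, ∑ j, A i j * ‖w j - w i‖ ^ 2 :=
    sum_nonneg fun i _ => sum_nonneg fun j _ => mul_nonneg (hA₀ i j) (sq_nonneg _)
  linarith

end InnerSums

section BilinearForm
variable {d N : ℕ}

theorem bform_comm (v w : Fin N → EuclideanSpace ℝ (Fin d)) : bform v w = bform w v := by
  simp only [bform, real_inner_comm]

theorem bform_add_right (v w z : Fin N → EuclideanSpace ℝ (Fin d)) :
    bform v (fun i => w i + z i) = bform v w + bform v z := by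
  simp only [bform, add_sub_add_comm, inner_add_right, sum_add_distrib, mul_add]

theorem bform_smul_right (c : ℝ) (v w : Fin N → EuclideanSpace ℝ (Fin d)) :
    bform v (fun i => c • w i) = c * bform v w := by
  simp only [bform, ← smul_sub, real_inner_smul_right, ← mul_sum]
  ring

theorem bform_sub_const_right (v w : Fin N → EuclideanSpace ℝ (Fin d))
    (c : EuclideanSpace ℝ (Fin d)) : bform v (fun i => w i - c) = bform v w := by
  simp only [bform, sub_sub_sub_cancel_right]

theorem bform_self_nonneg (w : Fin N → EuclideanSpace ℝ (Fin d)) : 0 ≤ bform w w :=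
  mul_nonneg (by positivity) <|
    sum_nonneg fun _ _ => sum_nonneg fun _ _ => real_inner_self_nonneg

theorem bform_eq_of_sum_eq_zero (hN : 0 < N) {w z : Fin N → EuclideanSpace ℝ (Fin d)}
    (hz : ∑ i, z i = 0) : bform w z = (N : ℝ)⁻¹ * ∑ i, ⟪w i, z i⟫_ℝ := by
  rw [bform, sum_sum_inner_sub_sub, hz, inner_zero_right, Fintype.card_fin]
  field_simp
  ring

theorem sum_sub_meanVec (hN : 0 < N) (w : Fin N → EuclideanSpace ℝ (Fin d)) :
    ∑ i, (w i - meanVec w) = 0 := by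
  rw [sum_sub_distrib, sum_const, card_univ, Fintype.card_fin, ← Nat.cast_smul_eq_nsmul ℝ,
    meanVec, smul_smul, mul_inv_cancel₀ (by positivity), one_smul, sub_self]

theorem bform_self_eq_sum_norm_sub_meanVec_sq (hN : 0 < N)
    (w : Fin N → EuclideanSpace ℝ (Fin d)) :
    bform w w = (N : ℝ)⁻¹ * ∑ i, ‖w i - meanVec w‖ ^ 2 := by
  have hcentred : bform (fun i => w i - meanVec w) (fun i => w i - meanVec w) = bform w w := by
    rw [bform_sub_const_right, bform_comm, bform_sub_const_right]
  rw [← hcentred, bform_eq_of_sum_eq_zero hN (sum_sub_meanVec hN w)]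
  simp only [real_inner_self_eq_norm_sq]

theorem sum_norm_sub_meanVec_le (hN : 0 < N) (w : Fin N → EuclideanSpace ℝ (Fin d)) :
    ∑ i, ‖w i - meanVec w‖ ≤ N * √(bform w w) := by
  have hCS := sq_sum_le_card_mul_sum_sq (s := univ) (f := fun i => ‖w i - meanVec w‖)
  have hN' : (N : ℝ) ≠ 0 := by positivity
  rw [card_univ, Fintype.card_fin,
    show (N : ℝ) * ∑ i, ‖w i - meanVec w‖ ^ 2 = N ^ 2 * bform w w by
      rw [bform_self_eq_sum_norm_sub_meanVec_sq hN]; field_simp] at hCS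
  calc ∑ i, ‖w i - meanVec w‖ ≤ √((N : ℝ) ^ 2 * bform w w) :=
        Real.le_sqrt_of_sq_le hCS
    _ = N * √(bform w w) := by rw [Real.sqrt_mul (by positivity), Real.sqrt_sq (by positivity)]

theorem norm_sub_meanVec_le (hN : 0 < N) (w : Fin N → EuclideanSpace ℝ (Fin d)) (i : Fin N) :
    ‖w i - meanVec w‖ ≤ N * √(bform w w) :=
  (single_le_sum (fun j _ => norm_nonneg (w j - meanVec w)) (mem_univ i)).trans
    (sum_norm_sub_meanVec_le hN w)

theorem norm_sub_le_two_mul_sqrt_bform (hN : 0 < N) (w : Fin N → EuclideanSpace ℝ (Fin d))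
    (i j : Fin N) : ‖w i - w j‖ ≤ 2 * N * √(bform w w) := by
  have := norm_sub_le_norm_sub_add_norm_sub (w i) (meanVec w) (w j)
  rw [norm_sub_rev (meanVec w)] at this
  linarith [norm_sub_meanVec_le hN w i, norm_sub_meanVec_le hN w j]

theorem sqrt_bform_le_of_norm_sub_le (hN : 0 < N) {w : Fin N → EuclideanSpace ℝ (Fin d)}
    {R : ℝ} (hR : ∀ i j, ‖w i - w j‖ ≤ R) : √(bform w w) ≤ R := by
  have hR₀ : 0 ≤ R := (norm_nonneg _).trans (hR ⟨0, hN⟩ ⟨0, hN⟩)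
  have hsum : ∑ i, ∑ j, ⟪w i - w j, w i - w j⟫_ℝ ≤ N ^ 2 * R ^ 2 := by
    calc ∑ i, ∑ j, ⟪w i - w j, w i - w j⟫_ℝ ≤ ∑ _i : Fin N, ∑ _j : Fin N, R ^ 2 :=
          sum_le_sum fun i _ => sum_le_sum fun j _ => by
            rw [real_inner_self_eq_norm_sq]
            exact pow_le_pow_left₀ (norm_nonneg _) (hR i j) 2
      _ = N ^ 2 * R ^ 2 := by
          simp only [sum_const, card_univ, Fintype.card_fin, nsmul_eq_mul]; ring
  rw [Real.sqrt_le_left hR₀, bform]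
  calc (2 * (N : ℝ) ^ 2)⁻¹ * ∑ i, ∑ j, ⟪w i - w j, w i - w j⟫_ℝ
      ≤ (2 * (N : ℝ) ^ 2)⁻¹ * (N ^ 2 * R ^ 2) := by gcongr
    _ ≤ R ^ 2 := by
      field_simp
      nlinarith [sq_nonneg R]

theorem bform_alignment_nonpos (hN : 0 < N) {A : Fin N → Fin N → ℝ}
    (hA : ∀ i j, A i j = A j i) (hA₀ : ∀ i j, 0 ≤ A i j) (w : Fin N → EuclideanSpace ℝ (Fin d)) :
    bform w (fun i => (N : ℝ)⁻¹ • ∑ j, A i j • (w j - w i)) ≤ 0 := by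
  rw [bform_eq_of_sum_eq_zero hN (by rw [← smul_sum, sum_sum_smul_sub_eq_zero hA, smul_zero])]
  simp only [real_inner_smul_right, inner_sum, ← mul_sum]
  exact mul_nonpos_of_nonneg_of_nonpos (by positivity) <|
    mul_nonpos_of_nonneg_of_nonpos (by positivity) (sum_sum_mul_inner_sub_nonpos hA hA₀ w)

theorem hasDerivAt_bform_self {w : ℝ → Fin N → EuclideanSpace ℝ (Fin d)}
    {w' : Fin N → EuclideanSpace ℝ (Fin d)} {t : ℝ}
    (hw : ∀ i, HasDerivAt (fun s => w s i) (w' i) t) :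
    HasDerivAt (fun s => bform (w s) (w s)) (2 * bform (w t) w') t := by
  have hdiff i j := ((hw i).fun_sub (hw j)).inner ℝ ((hw i).fun_sub (hw j))
  refine ((HasDerivAt.fun_sum fun i _ => HasDerivAt.fun_sum fun j _ => hdiff i j).const_mul
    (2 * (N : ℝ) ^ 2)⁻¹).congr_deriv ?_
  simp only [bform, real_inner_comm (w' _ - w' _), ← two_mul, ← mul_sum]
  ring

end BilinearForm

theorem le_exp_mul_of_hasDerivAt_le {f f' : ℝ → ℝ} {c : ℝ}
    (hf : ∀ t, 0 ≤ t → HasDerivAt f (f' t) t) (hf' : ∀ t, 0 ≤ t → f' t ≤ c * f t)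
    {t : ℝ} (ht : 0 ≤ t) : f t ≤ Real.exp (c * t) * f 0 := by
  have := le_gronwallBound_of_liminf_deriv_right_le (δ := f 0) (ε := 0)
    (fun s hs => (hf s hs.1).continuousAt.continuousWithinAt)
    (fun s hs _ hr => (hf s hs.1).hasDerivWithinAt.liminf_right_slope_le hr) le_rfl
    (fun s hs => by simpa using hf' s hs.1) t ⟨ht, le_rfl⟩
  rwa [gronwallBound_ε0, sub_zero, mul_comm] at this

theorem norm_sub_le_of_norm_deriv_le_mul_exp {E : Type*} [NormedAddCommGroup E]
    [NormedSpace ℝ E] {f f' : ℝ → E} {C α : ℝ} (hα : 0 < α)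
    (hf : ∀ t, 0 ≤ t → HasDerivAt f (f' t) t)
    (hf' : ∀ t, 0 ≤ t → ‖f' t‖ ≤ C * Real.exp (-α * t)) {T : ℝ} (hT : 0 ≤ T) :
    ‖f T - f 0‖ ≤ C / α := by
  have hC : 0 ≤ C := by simpa using (norm_nonneg _).trans (hf' 0 le_rfl)
  have hB (t : ℝ) : HasDerivAt (fun s => C / α * (1 - Real.exp (-α * s)))
      (C * Real.exp (-α * t)) t := by
    refine ((((hasDerivAt_id t).const_mul (-α)).exp.const_sub 1).const_mul (C / α)).congr_deriv ?_
    simp only [id]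
    field_simp
  have := image_norm_le_of_norm_deriv_right_le_deriv_boundary (a := 0) (b := T)
    (f := fun s => f s - f 0)
    (fun s hs => ((hf s hs.1).sub_const (f 0)).continuousAt.continuousWithinAt)
    (fun s hs => ((hf s hs.1).sub_const (f 0)).hasDerivWithinAt) (by simp) hB
    (fun s hs => hf' s hs.1) ⟨hT, le_rfl⟩
  refine this.trans ?_
  have : 0 < Real.exp (-α * T) := Real.exp_pos _
  have : 0 ≤ C / α := div_nonneg hC hα.le
  nlinarith

theorem ofReal_le_setLIntegral_Ioi {g : ℝ → ℝ} {s c : ℝ}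
    (hg : ∀ r ∈ Set.Ioc s (s + 1), c ≤ g r) :
    ENNReal.ofReal c ≤ ∫⁻ r in Set.Ioi s, ENNReal.ofReal (g r) :=
  calc ENNReal.ofReal c = ∫⁻ _ in Set.Ioc s (s + 1), ENNReal.ofReal c := by simp
    _ ≤ ∫⁻ r in Set.Ioc s (s + 1), ENNReal.ofReal (g r) :=
      setLIntegral_mono' measurableSet_Ioc fun r hr => ENNReal.ofReal_le_ofReal (hg r hr)
    _ ≤ ∫⁻ r in Set.Ioi s, ENNReal.ofReal (g r) := lintegral_mono_set Set.Ioc_subset_Ioi_self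

theorem exists_le_setLIntegral_Ioi_of_tendsto_zero {a : ℝ → ℝ}
    (ha_pos : ∀ r, 0 ≤ r → 0 < a r) (ha_mono : ∀ r s, 0 ≤ r → r ≤ s → a s ≤ a r)
    {k R : ℝ} (hk : 0 ≤ k) {σ ξ : ℝ → ℝ} (hξ₀ : ∀ t, 0 ≤ ξ t) (hξR : ∀ t, 0 ≤ t → ξ t ≤ R)
    (hσ : Tendsto σ atTop (nhds 0)) :
    ∃ T, 0 ≤ T ∧ ENNReal.ofReal (σ T) ≤ ∫⁻ r in Set.Ioi (ξ T), ENNReal.ofReal (a (k * r)) := by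
  have hR : 0 ≤ R + 1 := by linarith [hξ₀ 0, hξR 0 le_rfl]
  obtain ⟨T, hσT, hT⟩ := ((hσ.eventually (gt_mem_nhds (ha_pos _ (mul_nonneg hk hR)))).and
    (eventually_ge_atTop 0)).exists
  refine ⟨T, hT, (ENNReal.ofReal_le_ofReal hσT.le).trans (ofReal_le_setLIntegral_Ioi ?_)⟩
  intro r hr
  have hr₀ : 0 ≤ r := (hξ₀ T).trans hr.1.le
  exact ha_mono _ _ (mul_nonneg hk hr₀) (by gcongr; linarith [hr.2, hξR T hT])

theorem sqrt_le_sqrt_mul_exp_of_le {y z α t : ℝ} (h : y ≤ Real.exp (-2 * α * t) * z) :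
    √y ≤ √z * Real.exp (-α * t) := by
  have hexp : Real.exp (-2 * α * t) = Real.exp (-α * t) ^ 2 := by
    rw [← Real.exp_nat_mul]; ring_nf
  calc √y ≤ √(Real.exp (-α * t) ^ 2 * z) := Real.sqrt_le_sqrt (hexp ▸ h)
    _ = √z * Real.exp (-α * t) := by
      rw [Real.sqrt_mul (sq_nonneg _), Real.sqrt_sq (Real.exp_pos _).le, mul_comm]

theorem tendsto_zero_of_le_mul_exp {f : ℝ → ℝ} {K α : ℝ} (hα : 0 < α) (hf₀ : ∀ t, 0 ≤ f t)
    (hf : ∀ t, 0 ≤ t → f t ≤ K * Real.exp (-α * t)) : Tendsto f atTop (nhds 0) := by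
  have hexp : Tendsto (fun t => K * Real.exp (-α * t)) atTop (nhds 0) := by
    simpa using (Real.tendsto_exp_atBot.comp
      (tendsto_id.const_mul_atTop_of_neg (neg_lt_zero.2 hα))).const_mul K
  exact tendsto_of_tendsto_of_tendsto_of_le_of_le' tendsto_const_nhds hexp
    (Eventually.of_forall hf₀) ((eventually_ge_atTop 0).mono hf)

section CuckerSmale
variable {d N : ℕ} {a : ℝ → ℝ} {α : ℝ} {x v u : ℝ → Fin N → EuclideanSpace ℝ (Fin d)}

theorem bform_velocity_le_exp (hN : 0 < N) (ha : ∀ r, 0 ≤ r → 0 ≤ a r)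
    (hu : ∀ t, 0 ≤ t → ∀ i, u t i = -α • (v t i - meanVec (v t)))
    (hv : ∀ (i : Fin N), ∀ t, 0 ≤ t → HasDerivAt (fun s => v s i)
      ((N : ℝ)⁻¹ • ∑ j, a ‖x t i - x t j‖ • (v t j - v t i) + u t i) t)
    {t : ℝ} (ht : 0 ≤ t) :
    bform (v t) (v t) ≤ Real.exp (-2 * α * t) * bform (v 0) (v 0) := by
  refine le_exp_mul_of_hasDerivAt_le (fun s hs => hasDerivAt_bform_self (hv · s hs)) ?_ ht
  intro s hs
  simp only [hu s hs]
  rw [bform_add_right, bform_smul_right (-α), bform_sub_const_right]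
  have := bform_alignment_nonpos hN (fun i j => by rw [norm_sub_rev])
    (fun i j => ha _ (norm_nonneg (x s i - x s j))) (v s)
  linarith

theorem sqrt_bform_position_le (hN : 0 < N) (hα : 0 < α)
    (hx : ∀ (i : Fin N), ∀ t, 0 ≤ t → HasDerivAt (fun s => x s i) (v t i) t) {K : ℝ}
    (hV : ∀ t, 0 ≤ t → √(bform (v t) (v t)) ≤ K * Real.exp (-α * t)) {t : ℝ} (ht : 0 ≤ t) :
    √(bform (x t) (x t)) ≤ 2 * N * √(bform (x 0) (x 0)) + 2 * N * K / α := by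
  refine sqrt_bform_le_of_norm_sub_le hN fun i j => ?_
  have hdisp := norm_sub_le_of_norm_deriv_le_mul_exp (f := fun s => x s i - x s j) hα
    (fun s hs => (hx i s hs).sub (hx j s hs))
    (fun s hs => (norm_sub_le_two_mul_sqrt_bform hN (v s) i j).trans <| by
      rw [mul_assoc _ K]; gcongr; exact hV s hs) ht
  calc ‖x t i - x t j‖ ≤ ‖x 0 i - x 0 j‖ + ‖(x t i - x t j) - (x 0 i - x 0 j)‖ :=
        norm_le_norm_add_norm_sub' _ _
    _ ≤ 2 * N * √(bform (x 0) (x 0)) + 2 * N * K / α :=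
        add_le_add (norm_sub_le_two_mul_sqrt_bform hN _ i j) hdisp

end CuckerSmale

theorem totalControl_consensus_general
    {d N : ℕ} (hN : 0 < N)
    (a : ℝ → ℝ)
    (ha_pos : ∀ r, 0 ≤ r → 0 < a r)
    (ha_mono : ∀ r s, 0 ≤ r → r ≤ s → a s ≤ a r)
    (M : ℝ)
    (v0 : Fin N → EuclideanSpace ℝ (Fin d))
    (hV0 : 0 < bform v0 v0)
    (α : ℝ) (hα_pos : 0 < α) (hα_le : α ≤ M / (N * Real.sqrt (bform v0 v0)))
    (x v : ℝ → Fin N → EuclideanSpace ℝ (Fin d))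
    (hv0 : v 0 = v0)
    -- the total control `u(t) = -α v^⊥(t)`
    (u : ℝ → Fin N → EuclideanSpace ℝ (Fin d))
    (hu : ∀ t, 0 ≤ t → ∀ i, u t i = -α • (v t i - meanVec (v t)))
    (hx : ∀ (i : Fin N), ∀ t, 0 ≤ t → HasDerivAt (fun s => x s i) (v t i) t)
    (hv : ∀ (i : Fin N), ∀ t, 0 ≤ t → HasDerivAt (fun s => v s i)
      ((N : ℝ)⁻¹ • ∑ j, a ‖x t i - x t j‖ • (v t j - v t i) + u t i) t) :
    -- (1) admissibility
    (∀ t, 0 ≤ t → ∑ i, ‖u t i‖ ≤ M) ∧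
    -- (2) exponential decay of V, consensus, and reaching the consensus region
    (∀ t, 0 ≤ t → bform (v t) (v t) ≤ Real.exp (-2 * α * t) * bform (v 0) (v 0)) ∧
    (∀ i, Tendsto (fun t => ‖v t i - meanVec (v t)‖) atTop (nhds 0)) ∧
    (∃ T, 0 ≤ T ∧ ENNReal.ofReal (Real.sqrt (bform (v T) (v T))) ≤
      ∫⁻ r in Set.Ioi (Real.sqrt (bform (x T) (x T))),
        ENNReal.ofReal (a (Real.sqrt (2 * N) * r))) := by
  have hdecay t (ht : 0 ≤ t) := bform_velocity_le_exp hN (fun r hr => (ha_pos r hr).le) hu hv ht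
  have hsqrt t (ht : 0 ≤ t) := sqrt_le_sqrt_mul_exp_of_le (hdecay t ht)
  have hsqrt_tendsto : Tendsto (fun t => √(bform (v t) (v t))) atTop (nhds 0) :=
    tendsto_zero_of_le_mul_exp hα_pos (fun _ => Real.sqrt_nonneg _) hsqrt
  refine ⟨fun t ht => ?_, hdecay, fun i => ?_, ?_⟩
  · calc ∑ i, ‖u t i‖ = α * ∑ i, ‖v t i - meanVec (v t)‖ := by
          simp only [hu t ht, norm_smul, norm_neg, Real.norm_of_nonneg hα_pos.le, mul_sum]
      _ ≤ α * (N * √(bform (v t) (v t))) := by gcongr; exact sum_norm_sub_meanVec_le hN _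
      _ ≤ α * (N * √(bform v0 v0)) := by
          gcongr
          rw [← hv0]
          exact (hdecay t ht).trans (mul_le_of_le_one_left (bform_self_nonneg _)
            (Real.exp_le_one_iff.2 (by nlinarith)))
      _ ≤ M := (le_div_iff₀ (by positivity)).1 hα_le
  · refine tendsto_of_tendsto_of_tendsto_of_le_of_le tendsto_const_nhds ?_
      (fun t => norm_nonneg _) (fun t => norm_sub_meanVec_le hN (v t) i)
    simpa using hsqrt_tendsto.const_mul (N : ℝ)
  · exact exists_le_setLIntegral_Ioi_of_tendsto_zero ha_pos ha_mono (Real.sqrt_nonneg _)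
      (fun t => Real.sqrt_nonneg _) (fun t ht => sqrt_bform_position_le hN hα_pos hx hsqrt ht)
      hsqrt_tendsto

/-- **total control.** The feedback `u = -α v^⊥` with
`0 < α ≤ M/(N√V₀)` is admissible, makes `V` decay exponentially
(`V(t) ≤ e^{-2αt} V(0)`), steers the system to consensus and reaches the consensus
region in finite time. -/
theorem totalControl_consensus
    {d N : ℕ} (hN : 0 < N)
    (a : ℝ → ℝ)
    (ha_pos : ∀ r, 0 ≤ r → 0 < a r)
    (ha_mono : ∀ r s, 0 ≤ r → r ≤ s → a s ≤ a r)
    (ha_bdd : ∃ C, ∀ r, 0 ≤ r → a r ≤ C)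
    (ha_lip : ∃ K : NNReal, LipschitzWith K a)
    (M : ℝ) (hM : 0 < M)
    (x0 v0 : Fin N → EuclideanSpace ℝ (Fin d))
    (hV0 : 0 < bform v0 v0)
    (α : ℝ) (hα_pos : 0 < α) (hα_le : α ≤ M / (N * Real.sqrt (bform v0 v0)))
    (x v : ℝ → Fin N → EuclideanSpace ℝ (Fin d))
    (hx0 : x 0 = x0) (hv0 : v 0 = v0)
    -- the total control `u(t) = -α v^⊥(t)`
    (u : ℝ → Fin N → EuclideanSpace ℝ (Fin d))
    (hu : ∀ t, 0 ≤ t → ∀ i, u t i = -α • (v t i - meanVec (v t)))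
    (hx : ∀ (i : Fin N), ∀ t, 0 ≤ t → HasDerivAt (fun s => x s i) (v t i) t)
    (hv : ∀ (i : Fin N), ∀ t, 0 ≤ t → HasDerivAt (fun s => v s i)
      ((N : ℝ)⁻¹ • ∑ j, a ‖x t i - x t j‖ • (v t j - v t i) + u t i) t) :
    -- (1) admissibility
    (∀ t, 0 ≤ t → ∑ i, ‖u t i‖ ≤ M) ∧
    -- (2) exponential decay of V, consensus, and reaching the consensus region
    (∀ t, 0 ≤ t → bform (v t) (v t) ≤ Real.exp (-2 * α * t) * bform (v 0) (v 0)) ∧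
    (∀ i, Tendsto (fun t => ‖v t i - meanVec (v t)‖) atTop (nhds 0)) ∧
    (∃ T, 0 ≤ T ∧ ENNReal.ofReal (Real.sqrt (bform (v T) (v T))) ≤
      ∫⁻ r in Set.Ioi (Real.sqrt (bform (x T) (x T))),
        ENNReal.ofReal (a (Real.sqrt (2 * N) * r))) :=
  totalControl_consensus_general hN a ha_pos ha_mono M v0 hV0 α hα_pos hα_le x v hv0 u hu hx hv
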